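/- Let σ₀ > -3/2 and -3/2 < σ ≤ σ₀. Then there exists a constant c₀ = c(σ₀, σ) such that for every f ∈ 𝒳^{σ₀}(ℝ³) ∩ L²(ℝ³), ‖f‖_{𝒳^σ} ≤ c₀ ‖f‖_{L²}^{1-θ} ‖f‖_{𝒳^{σ₀}}^{θ}, where θ = (σ + 3/2)/(σ₀ + 3/2). -/

import Mathlib

/-!
Split `∫ ‖x‖ ^ σ g` at a radius `r`. Inside the ball, Cauchy–Schwarz against
`∫_{‖x‖ < r} ‖x‖ ^ (2σ) = K r ^ (2σ + d)`, finite because `2σ > -d`, gives `√K r ^ (σ + d/2) ‖g‖₂`.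
Outside, `‖x‖ ^ σ ≤ r ^ (σ - σ₀) ‖x‖ ^ σ₀` since `σ ≤ σ₀`. The choice
`r = (‖g‖_{σ₀} / ‖g‖₂) ^ (1 / (σ₀ + d/2))` makes both terms equal to
`‖g‖₂ ^ (1 - θ) ‖g‖_{σ₀} ^ θ`.
-/

open MeasureTheory Real Set Metric

theorem rpow_le_rpow_sub_mul_rpow {r y σ σ₀ : ℝ} (hr : 0 < r) (hry : r ≤ y) (hσ : σ ≤ σ₀) :
    y ^ σ ≤ r ^ (σ - σ₀) * y ^ σ₀ := by
  have hy : 0 < y := hr.trans_le hry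
  calc y ^ σ = y ^ (σ - σ₀) * y ^ σ₀ := by rw [← rpow_add hy, sub_add_cancel]
    _ ≤ r ^ (σ - σ₀) * y ^ σ₀ :=
      mul_le_mul_of_nonneg_right (rpow_le_rpow_of_nonpos hr hry (by linarith)) (by positivity)

theorem le_mul_rpow_mul_rpow_of_forall_pos {I A L M a c : ℝ} (hc : c ≠ 0) (hL : 0 < L)
    (hM : 0 < M) (h : ∀ r > 0, I ≤ A * r ^ a * L + r ^ (a - c) * M) :
    I ≤ (A + 1) * L ^ (1 - a / c) * M ^ (a / c) := by
  have hML : 0 < M / L := div_pos hM hL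
  -- the radius balancing the two terms
  set r := (M / L) ^ (1 / c)
  have hr : 0 < r := rpow_pos_of_pos hML _
  have hrc : r ^ c = M / L := by rw [← rpow_mul hML.le, one_div_mul_cancel hc, rpow_one]
  have hra : r ^ a * L = L ^ (1 - a / c) * M ^ (a / c) := by
    rw [← rpow_mul hML.le, one_div_mul_eq_div, div_rpow hM.le hL.le, rpow_sub hL, rpow_one]
    field_simp
  calc I ≤ A * r ^ a * L + r ^ (a - c) * M := h r hr
    _ = (A + 1) * (r ^ a * L) := by
      rw [rpow_sub hr, hrc]
      field_simp
    _ = _ := by rw [hra]; ring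

theorem ae_eq_zero_of_integral_sq_eq_zero {α : Type*} [MeasurableSpace α] {μ : Measure α}
    {g : α → ℝ} (hg2 : Integrable (fun x => g x ^ 2) μ) (h : ∫ x, g x ^ 2 ∂μ = 0) :
    g =ᵐ[μ] 0 := by
  filter_upwards [(integral_eq_zero_iff_of_nonneg (fun x => sq_nonneg (g x)) hg2).1 h] with x hx
  exact pow_eq_zero_iff two_ne_zero |>.1 hx

theorem memLp_two_of_integrable_sq {α : Type*} [MeasurableSpace α] {μ : Measure α} {g : α → ℝ}
    (hg : 0 ≤ g) (hg2 : Integrable (fun x => g x ^ 2) μ) : MemLp g 2 μ := by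
  have hgm : AEStronglyMeasurable g μ := by
    have hsqrt := continuous_sqrt.comp_aestronglyMeasurable hg2.aestronglyMeasurable
    simpa only [Function.comp_def, sqrt_sq (hg _)] using hsqrt
  exact (memLp_two_iff_integrable_sq hgm).2 hg2

theorem norm_rpow_mul_le_of_mem_compl_ball {E : Type*} [NormedAddCommGroup E] {σ σ₀ r : ℝ}
    (hσ : σ ≤ σ₀) (hr : 0 < r) {g : E → ℝ} (hg : 0 ≤ g) {x : E} (hx : x ∈ (ball 0 r)ᶜ) :
    ‖x‖ ^ σ * g x ≤ r ^ (σ - σ₀) * (‖x‖ ^ σ₀ * g x) := by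
  rw [← mul_assoc]
  exact mul_le_mul_of_nonneg_right (rpow_le_rpow_sub_mul_rpow hr (by simpa using hx) hσ) (hg x)

theorem ae_eq_zero_of_integral_norm_rpow_mul_eq_zero {E : Type*} [NormedAddCommGroup E]
    [MeasurableSpace E] {μ : Measure E} [NullSingletonClass μ] {σ₀ : ℝ} {g : E → ℝ}
    (hg : 0 ≤ g) (hgw : Integrable (fun x => ‖x‖ ^ σ₀ * g x) μ)
    (h : ∫ x, ‖x‖ ^ σ₀ * g x ∂μ = 0) : g =ᵐ[μ] 0 := by
  have hw := (integral_eq_zero_iff_of_nonneg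
    (fun x => mul_nonneg (rpow_nonneg (norm_nonneg x) σ₀) (hg x)) hgw).1 h
  filter_upwards [hw, μ.ae_ne 0] with x hx hx0
  exact (mul_eq_zero.1 hx).resolve_left (rpow_pos_of_pos (norm_pos_iff.2 hx0) σ₀).ne'

section NormWeights

variable {E : Type*} [NormedAddCommGroup E] [MeasurableSpace E] [OpensMeasurableSpace E]
  (μ : Measure E)

theorem integrableOn_compl_ball_norm_rpow_mul {σ σ₀ r : ℝ} (hσ : σ ≤ σ₀) (hr : 0 < r) {g : E → ℝ}
    (hg : 0 ≤ g) (hgm : AEStronglyMeasurable g μ)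
    (hgw : Integrable (fun x => ‖x‖ ^ σ₀ * g x) μ) :
    IntegrableOn (fun x => ‖x‖ ^ σ * g x) (ball 0 r)ᶜ μ := by
  refine Integrable.mono' ((hgw.const_mul (r ^ (σ - σ₀))).restrict)
    (((measurable_norm.pow_const σ).aestronglyMeasurable.mul hgm).restrict) ?_
  filter_upwards [ae_restrict_mem measurableSet_ball.compl] with x hx
  rw [norm_of_nonneg (mul_nonneg (rpow_nonneg (norm_nonneg x) σ) (hg x))]
  exact norm_rpow_mul_le_of_mem_compl_ball hσ hr hg hx

theorem setIntegral_compl_ball_norm_rpow_mul_le {σ σ₀ r : ℝ} (hσ : σ ≤ σ₀) (hr : 0 < r)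
    {g : E → ℝ} (hg : 0 ≤ g) (hgm : AEStronglyMeasurable g μ)
    (hgw : Integrable (fun x => ‖x‖ ^ σ₀ * g x) μ) :
    ∫ x in (ball 0 r)ᶜ, ‖x‖ ^ σ * g x ∂μ ≤ r ^ (σ - σ₀) * ∫ x, ‖x‖ ^ σ₀ * g x ∂μ := by
  have hgw' := hgw.const_mul (r ^ (σ - σ₀))
  calc ∫ x in (ball 0 r)ᶜ, ‖x‖ ^ σ * g x ∂μ
      ≤ ∫ x in (ball 0 r)ᶜ, r ^ (σ - σ₀) * (‖x‖ ^ σ₀ * g x) ∂μ :=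
        setIntegral_mono_on (integrableOn_compl_ball_norm_rpow_mul μ hσ hr hg hgm hgw)
          hgw'.integrableOn measurableSet_ball.compl
          fun x hx => norm_rpow_mul_le_of_mem_compl_ball hσ hr hg hx
    _ ≤ ∫ x, r ^ (σ - σ₀) * (‖x‖ ^ σ₀ * g x) ∂μ :=
        setIntegral_le_integral hgw' (.of_forall fun x =>
          mul_nonneg (rpow_nonneg hr.le _) (mul_nonneg (rpow_nonneg (norm_nonneg x) _) (hg x)))
    _ = r ^ (σ - σ₀) * ∫ x, ‖x‖ ^ σ₀ * g x ∂μ := integral_const_mul _ _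

end NormWeights

section HaarMeasure

local notation "dim" => Module.finrank ℝ

variable {E : Type*} [NormedAddCommGroup E] [NormedSpace ℝ E] [FiniteDimensional ℝ E]
  [MeasurableSpace E] [BorelSpace E] [Nontrivial E] (μ : Measure E) [μ.IsAddHaarMeasure]

theorem setIntegral_ball_norm_rpow {t r : ℝ} (ht : -(dim E : ℝ) < t) (hr : 0 ≤ r) :
    ∫ x in ball (0 : E) r, ‖x‖ ^ t ∂μ =
      dim E * μ.real (ball 0 1) / (t + dim E) * r ^ (t + dim E) := by
  have hradial : ∫ y in Ioi (0 : ℝ), y ^ (dim E - 1) • (Iio r).indicator (· ^ t) y =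
      ∫ y in (0)..r, y ^ (t + dim E - 1) := by
    rw [intervalIntegral.integral_of_le hr, integral_Ioc_eq_integral_Ioo,
      ← integral_indicator measurableSet_Ioo, ← integral_indicator measurableSet_Ioi]
    congr 1 with y
    by_cases hy : 0 < y
    · have hd : 1 ≤ dim E := Module.finrank_pos
      by_cases hyr : y < r
      · simp [indicator, hy, hyr, ← rpow_natCast, ← rpow_add hy, Nat.cast_sub hd]
        ring_nf
      · simp [indicator, hy, hyr]
    · simp [indicator, hy]
  have hball : (ball (0 : E) r).indicator (‖·‖ ^ t) = fun x => (Iio r).indicator (· ^ t) ‖x‖ := by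
    ext x
    simp [indicator]
  rw [← integral_indicator measurableSet_ball, hball, integral_fun_norm_addHaar, hradial,
    integral_rpow (Or.inl (by linarith)), zero_rpow (by linarith), nsmul_eq_mul, smul_eq_mul,
    show t + dim E - 1 + 1 = t + dim E by ring]
  simp only [sub_zero]
  ring

theorem integrableOn_ball_norm_rpow {t : ℝ} (ht : -(dim E : ℝ) < t) (r : ℝ) :
    IntegrableOn (fun x : E => ‖x‖ ^ t) (ball 0 r) μ :=
  integrableOn_ball_of_norm_le_rpow Module.finrank_pos (α := -t) (C := 1) (by linarith)
    (.of_forall fun x => by simp [abs_of_nonneg (rpow_nonneg (norm_nonneg x) t)])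
    (measurable_norm.pow_const t).aestronglyMeasurable

theorem memLp_norm_rpow_ball {σ : ℝ} (hσ : -(dim E / 2 : ℝ) < σ) (r : ℝ) :
    MemLp (fun x : E => ‖x‖ ^ σ) 2 (μ.restrict (ball 0 r)) := by
  refine (memLp_two_iff_integrable_sq (measurable_norm.pow_const σ).aestronglyMeasurable).2 ?_
  refine (integrableOn_ball_norm_rpow μ (t := 2 * σ) (by linarith) r).congr_fun
    (fun x _ => ?_) measurableSet_ball
  rw [← rpow_natCast, ← rpow_mul (norm_nonneg x)]
  ring_nf

theorem setIntegral_ball_norm_rpow_mul_le {σ r : ℝ} (hσ : -(dim E / 2 : ℝ) < σ)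
    (hr : 0 ≤ r) {g : E → ℝ} (hg : 0 ≤ g) (hg2 : MemLp g 2 μ) :
    ∫ x in ball 0 r, ‖x‖ ^ σ * g x ∂μ ≤
      √(dim E * μ.real (ball 0 1) / (2 * σ + dim E)) * r ^ (σ + dim E / 2) *
        √(∫ x, g x ^ 2 ∂μ) := by
  have hweight : (∫ x in ball 0 r, (‖x‖ ^ σ) ^ (2 : ℝ) ∂μ) ^ (1 / (2 : ℝ)) =
      √((dim E : ℝ) * μ.real (ball 0 1) / (2 * σ + (dim E : ℝ))) * r ^ (σ + (dim E : ℝ) / 2) := by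
    have hK : 0 ≤ (dim E : ℝ) * μ.real (ball 0 1) / (2 * σ + (dim E : ℝ)) := by
      have : 0 < 2 * σ + (dim E : ℝ) := by linarith
      positivity
    simp_rw [← rpow_mul (norm_nonneg _), mul_comm σ 2]
    rw [setIntegral_ball_norm_rpow μ (by linarith) hr, sqrt_eq_rpow,
      mul_rpow hK (rpow_nonneg hr _), ← rpow_mul hr]
    ring_nf
  have hg2' : (∫ x in ball 0 r, g x ^ (2 : ℝ) ∂μ) ^ (1 / (2 : ℝ)) ≤ √(∫ x, g x ^ 2 ∂μ) := by
    simp_rw [rpow_two, sqrt_eq_rpow]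
    refine rpow_le_rpow (integral_nonneg fun x => sq_nonneg _) ?_ (by norm_num)
    exact setIntegral_le_integral hg2.integrable_sq (.of_forall fun x => sq_nonneg _)
  calc ∫ x in ball 0 r, ‖x‖ ^ σ * g x ∂μ
      ≤ (∫ x in ball 0 r, (‖x‖ ^ σ) ^ (2 : ℝ) ∂μ) ^ (1 / (2 : ℝ)) *
          (∫ x in ball 0 r, g x ^ (2 : ℝ) ∂μ) ^ (1 / (2 : ℝ)) :=
        integral_mul_le_Lp_mul_Lq_of_nonneg .two_two
          (.of_forall fun x => rpow_nonneg (norm_nonneg x) σ) (.of_forall hg)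
          (by simpa using memLp_norm_rpow_ball μ hσ r) (by simpa using hg2.restrict _)
    _ ≤ _ := by
      rw [hweight]
      gcongr

theorem integral_norm_rpow_mul_le_of_pos {σ σ₀ r : ℝ} (hσ : -(dim E / 2 : ℝ) < σ)
    (hσσ₀ : σ ≤ σ₀) (hr : 0 < r) {g : E → ℝ} (hg : 0 ≤ g) (hg2 : MemLp g 2 μ)
    (hgw : Integrable (fun x => ‖x‖ ^ σ₀ * g x) μ) :
    ∫ x, ‖x‖ ^ σ * g x ∂μ ≤
      √(dim E * μ.real (ball 0 1) / (2 * σ + dim E)) * r ^ (σ + dim E / 2) *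
          √(∫ x, g x ^ 2 ∂μ) + r ^ (σ - σ₀) * ∫ x, ‖x‖ ^ σ₀ * g x ∂μ := by
  have hlow : IntegrableOn (fun x => ‖x‖ ^ σ * g x) (ball 0 r) μ :=
    (memLp_norm_rpow_ball μ hσ r).integrable_mul (hg2.restrict _)
  have hhigh := integrableOn_compl_ball_norm_rpow_mul μ hσσ₀ hr hg hg2.1 hgw
  have hint : Integrable (fun x => ‖x‖ ^ σ * g x) μ := by
    simpa using hlow.union hhigh
  rw [← integral_add_compl measurableSet_ball hint]
  exact add_le_add (setIntegral_ball_norm_rpow_mul_le μ hσ hr.le hg hg2)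
    (setIntegral_compl_ball_norm_rpow_mul_le μ hσσ₀ hr hg hg2.1 hgw)

theorem exists_integral_norm_rpow_mul_le {σ₀ σ : ℝ} (hσ : -(dim E / 2 : ℝ) < σ)
    (hσσ₀ : σ ≤ σ₀) :
    ∃ C : ℝ, 0 < C ∧ ∀ g : E → ℝ, 0 ≤ g → Integrable (fun x => g x ^ 2) μ →
      Integrable (fun x => ‖x‖ ^ σ₀ * g x) μ →
      ∫ x, ‖x‖ ^ σ * g x ∂μ ≤
        C * √(∫ x, g x ^ 2 ∂μ) ^ (1 - (σ + dim E / 2) / (σ₀ + dim E / 2)) *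
          (∫ x, ‖x‖ ^ σ₀ * g x ∂μ) ^ ((σ + dim E / 2) / (σ₀ + dim E / 2)) := by
  set K := √(dim E * μ.real (ball 0 1) / (2 * σ + dim E))
  refine ⟨K + 1, by positivity, fun g hg hg2 hgw => ?_⟩
  have hL0 : 0 ≤ ∫ x, g x ^ 2 ∂μ := integral_nonneg fun x => sq_nonneg _
  have hM0 : 0 ≤ ∫ x, ‖x‖ ^ σ₀ * g x ∂μ :=
    integral_nonneg fun x => mul_nonneg (rpow_nonneg (norm_nonneg x) σ₀) (hg x)
  by_cases hzero : g =ᵐ[μ] 0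
  · rw [integral_eq_zero_of_ae (by filter_upwards [hzero] with x hx; simp [hx])]
    exact mul_nonneg (mul_nonneg (by positivity) (rpow_nonneg (sqrt_nonneg _) _))
      (rpow_nonneg hM0 _)
  have hL : 0 < √(∫ x, g x ^ 2 ∂μ) := sqrt_pos.2 <| hL0.lt_of_ne' fun h =>
    hzero (ae_eq_zero_of_integral_sq_eq_zero hg2 h)
  have hM : 0 < ∫ x, ‖x‖ ^ σ₀ * g x ∂μ := hM0.lt_of_ne' fun h =>
    hzero (ae_eq_zero_of_integral_norm_rpow_mul_eq_zero hg hgw h)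
  refine le_mul_rpow_mul_rpow_of_forall_pos (by linarith) hL hM fun r hr => ?_
  rw [show σ + dim E / 2 - (σ₀ + dim E / 2) = σ - σ₀ by ring]
  exact integral_norm_rpow_mul_le_of_pos μ hσ hσσ₀ hr hg (memLp_two_of_integrable_sq hg hg2) hgw

end HaarMeasure

theorem X_sigma_interpolation_general (σ₀ σ : ℝ) (h₁ : -(3/2) < σ) (h₂ : σ ≤ σ₀) :
    ∃ c₀ : ℝ, 0 < c₀ ∧ ∀ F : EuclideanSpace ℝ (Fin 3) → ℂ,
      Integrable (fun ξ => ‖F ξ‖ ^ 2) →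
      Integrable (fun ξ => ‖ξ‖ ^ σ₀ * ‖F ξ‖) →
      ∫ ξ, ‖ξ‖ ^ σ * ‖F ξ‖ ≤
        c₀ * Real.sqrt (∫ ξ, ‖F ξ‖ ^ 2) ^ (1 - (σ + 3/2) / (σ₀ + 3/2)) *
          (∫ ξ, ‖ξ‖ ^ σ₀ * ‖F ξ‖) ^ ((σ + 3/2) / (σ₀ + 3/2)) := by
  have hdim : (Module.finrank ℝ (EuclideanSpace ℝ (Fin 3)) : ℝ) = 3 := by simp
  obtain ⟨C, hC, hbound⟩ := exists_integral_norm_rpow_mul_le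
    (volume : Measure (EuclideanSpace ℝ (Fin 3))) (σ₀ := σ₀) (by rw [hdim]; linarith) h₂
  rw [hdim] at hbound
  exact ⟨C, hC, fun F hF2 hFw => hbound (‖F ·‖) (fun _ => norm_nonneg _) hF2 hFw⟩

/-- `𝒳^{σ₀} ∩ L² ↪ 𝒳^σ` for `-3/2 < σ ≤ σ₀`:
`‖f‖_{𝒳^σ} ≤ c₀ ‖f‖_{L²}^{1-θ} ‖f‖_{𝒳^{σ₀}}^θ` with `θ = (σ+3/2)/(σ₀+3/2)`.
Stated on the Fourier side with `F = 𝓕 f`, `‖f‖_{L²} = (∫‖F‖²)^{1/2}` (Plancherel, up to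
a fixed constant absorbed in `c₀`) and `‖f‖_{𝒳^τ} = ∫‖ξ‖^τ‖F(ξ)‖ dξ`. -/
theorem X_sigma_interpolation (σ₀ σ : ℝ) (h₀ : -(3/2) < σ₀) (h₁ : -(3/2) < σ) (h₂ : σ ≤ σ₀) :
    ∃ c₀ : ℝ, 0 < c₀ ∧ ∀ F : EuclideanSpace ℝ (Fin 3) → ℂ,
      Integrable (fun ξ => ‖F ξ‖ ^ 2) →
      Integrable (fun ξ => ‖ξ‖ ^ σ₀ * ‖F ξ‖) →
      ∫ ξ, ‖ξ‖ ^ σ * ‖F ξ‖ ≤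
        c₀ * Real.sqrt (∫ ξ, ‖F ξ‖ ^ 2) ^ (1 - (σ + 3/2) / (σ₀ + 3/2)) *
          (∫ ξ, ‖ξ‖ ^ σ₀ * ‖F ξ‖) ^ ((σ + 3/2) / (σ₀ + 3/2)) :=
  X_sigma_interpolation_general σ₀ σ h₁ h₂
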